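/- arXiv:2403.14404 — 3 statements merged into one kernel-verified Lean document; each statement's English description precedes it below -/
import Mathlib

section
/- Let β, ᾱ' ∈ (0,1) be real numbers, set α = 1 − β, ᾱ = α·ᾱ', Σ = (1−ᾱ')·β/(1−ᾱ), and for x, x', x₀ ∈ ℝ set μ̃ = (√α·(1−ᾱ')/(1−ᾱ))·x + (√ᾱ'·β/(1−ᾱ))·x₀. Then for all x, x', x₀ ∈ ℝ the exact product identity of Gaussian densities holds: gaussianPDFReal (√α·x') β x · gaussianPDFReal (√ᾱ'·x₀) (1−ᾱ') x' = gaussianPDFReal μ̃ Σ x' · gaussianPDFReal (√ᾱ·x₀) (1−ᾱ) x. (This is Bayes' theorem for the Gaussian forward diffusion: the reverse conditional q(x_{t−1} | x_t, x₀) is Gaussian with mean μ̃ and variance Σ, and the forward marginal is Gaussian with mean √ᾱ·x₀ and variance 1−ᾱ.) -/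
open Real ProbabilityTheory

/-- Bayes' theorem for the Gaussian forward diffusion: the product of the one-step
forward kernel density and the previous-step conditional marginal density equals the
product of the reverse conditional density (with mean `μ̃` and variance `Sv`) and the
current-step conditional marginal density. -/
theorem gaussian_bayes_reverse_conditional
    (β αbar' : ℝ) (hβ : β ∈ Set.Ioo (0 : ℝ) 1) (hαbar' : αbar' ∈ Set.Ioo (0 : ℝ) 1)
    (α : ℝ) (hα : α = 1 - β) (αbar : ℝ) (hαbar : αbar = α * αbar')
    (Sv : ℝ) (hSv : Sv = (1 - αbar') * β / (1 - αbar)) :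
    ∀ x x' x₀ : ℝ,
      gaussianPDFReal (Real.sqrt α * x') β.toNNReal x
          * gaussianPDFReal (Real.sqrt αbar' * x₀) (1 - αbar').toNNReal x' =
        gaussianPDFReal
            ((Real.sqrt α * (1 - αbar') / (1 - αbar)) * x
              + (Real.sqrt αbar' * β / (1 - αbar)) * x₀)
            Sv.toNNReal x'
          * gaussianPDFReal (Real.sqrt αbar * x₀) (1 - αbar).toNNReal x := by
  obtain ⟨hβ0, hβ1⟩ := hβ
  obtain ⟨ha0, ha1⟩ := hαbar'
  have hα0 : 0 < α := by rw [hα]; linarith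
  have hαbar0 : 0 < αbar := by rw [hαbar]; positivity
  have hαbar1 : αbar < 1 := by rw [hαbar]; nlinarith
  have h1a' : 0 < 1 - αbar' := by linarith
  have h1a : 0 < 1 - αbar := by linarith
  have hSv0 : 0 < Sv := by rw [hSv]; positivity
  set a := Real.sqrt α with ha_def
  set b := Real.sqrt αbar' with hb_def
  have hsa : a ^ 2 = α := Real.sq_sqrt hα0.le
  have hsb : b ^ 2 = αbar' := Real.sq_sqrt ha0.le
  have hsab : Real.sqrt αbar = a * b := by
    rw [hαbar, Real.sqrt_mul hα0.le]
  have hβa : β = 1 - a ^ 2 := by rw [hsa, hα]; ring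
  have hab : αbar = a ^ 2 * b ^ 2 := by rw [hsa, hsb, hαbar]
  intro x x' x₀
  simp only [gaussianPDFReal, Real.coe_toNNReal _ hβ0.le, Real.coe_toNNReal _ h1a'.le,
    Real.coe_toNNReal _ hSv0.le, Real.coe_toNNReal _ h1a.le]
  rw [mul_mul_mul_comm, ← Real.exp_add, mul_mul_mul_comm, ← Real.exp_add]
  have hnorm : (√(2 * π * β))⁻¹ * (√(2 * π * (1 - αbar')))⁻¹
      = (√(2 * π * Sv))⁻¹ * (√(2 * π * (1 - αbar)))⁻¹ := by
    rw [← mul_inv, ← mul_inv, ← Real.sqrt_mul (by positivity), ← Real.sqrt_mul (by positivity)]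
    congr 2
    rw [hSv]
    field_simp
  rw [hnorm]
  congr 2
  have hβ0' : (1 : ℝ) - a ^ 2 ≠ 0 := by rw [← hβa]; exact hβ0.ne'
  have h1a'' : (1 : ℝ) - b ^ 2 ≠ 0 := by rw [hsb]; exact h1a'.ne'
  have h1ab : (1 : ℝ) - a ^ 2 * b ^ 2 ≠ 0 := by rw [← hab]; exact h1a.ne'
  rw [hsab, hSv, hab, ← hsb, hβa]
  field_simp
  ring
end

section
/- Let β, ᾱ' ∈ (0,1) be real numbers, set α = 1 − β and ᾱ = α·ᾱ', and let x₀ ∈ ℝ. Then the pushforward of the Gaussian measure gaussianReal (√ᾱ'·x₀) (1−ᾱ') under the map y ↦ √α·y, convolved with gaussianReal 0 β, equals gaussianReal (√ᾱ·x₀) (1−ᾱ). In particular the key schedule identity α·(1−ᾱ') + β = 1 − ᾱ holds, and one step of the forward diffusion kernel maps the Gaussian conditional marginal at the previous timestep to the Gaussian conditional marginal at the current timestep. -/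
open Real MeasureTheory ProbabilityTheory

open scoped NNReal

lemma gaussianReal_map_sqrt_mul_conv_gaussianReal {a : ℝ} (ha : 0 ≤ a) (m : ℝ) (v w : ℝ≥0) :
    (gaussianReal m v).map (√a * ·) ∗ gaussianReal 0 w
      = gaussianReal (√a * m) (a.toNNReal * v + w) := by
  rw [gaussianReal_map_const_mul, gaussianReal_conv_gaussianReal, add_zero]
  congr 3
  ext
  simp [Real.sq_sqrt ha, Real.coe_toNNReal _ ha]

/-- One step of the forward diffusion kernel maps the Gaussian conditional marginal at
the previous timestep to the Gaussian conditional marginal at the current timestep: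
the pushforward of `N(√ᾱ'·x₀, 1−ᾱ')` under `y ↦ √α·y`, convolved with `N(0, β)`,
equals `N(√ᾱ·x₀, 1−ᾱ)`.  In particular the schedule identity
`α·(1−ᾱ') + β = 1−ᾱ` holds. -/
theorem forward_diffusion_step_gaussian_marginal
    (β αbar' : ℝ) (hβ : β ∈ Set.Ioo (0 : ℝ) 1) (hαbar' : αbar' ∈ Set.Ioo (0 : ℝ) 1)
    (α : ℝ) (hα : α = 1 - β) (αbar : ℝ) (hαbar : αbar = α * αbar') (x₀ : ℝ) :
    Measure.conv
        (Measure.map (fun y : ℝ => Real.sqrt α * y)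
          (gaussianReal (Real.sqrt αbar' * x₀) (1 - αbar').toNNReal))
        (gaussianReal 0 β.toNNReal)
      = gaussianReal (Real.sqrt αbar * x₀) (1 - αbar).toNNReal
    ∧ α * (1 - αbar') + β = 1 - αbar := by
  obtain ⟨hβ_pos, hβ_lt_one⟩ := hβ
  obtain ⟨-, hαbar'_lt_one⟩ := hαbar'
  have hschedule : α * (1 - αbar') + β = 1 - αbar := by subst hα hαbar; ring
  have hα_nonneg : 0 ≤ α := by linarith
  refine ⟨?_, hschedule⟩
  rw [gaussianReal_map_sqrt_mul_conv_gaussianReal hα_nonneg, ← mul_assoc,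
    ← Real.sqrt_mul hα_nonneg, ← hαbar, ← Real.toNNReal_mul hα_nonneg,
    ← Real.toNNReal_add (by nlinarith) hβ_pos.le, hschedule]
end

section
/- Let T ≥ 1 and let β_1, …, β_T ∈ (0,1) be a variance schedule with α_t = 1 − β_t and ᾱ_t = ∏_{i=1}^t α_i. On a probability space, let ε_1, …, ε_T be independent real random variables each distributed as gaussianReal 0 1, let x₀ ∈ ℝ be a constant, and define recursively X_0 = x₀ and X_t = √(1−β_t)·X_{t−1} + √β_t·ε_t for 1 ≤ t ≤ T. Then for every 1 ≤ t ≤ T, the law of X_t is gaussianReal (√ᾱ_t·x₀) (1−ᾱ_t); i.e., the forward diffusion conditional marginal at any timestep has the closed form q(x_t | x₀) = N(√ᾱ_t·x₀, 1−ᾱ_t). -/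
/-!
Each step `x ↦ √(1-β) x + √β ε` with `ε ~ N(0,1)` independent of `x` maps `N(√a x₀, 1 - a)` to
`N(√(a(1-β)) x₀, 1 - a(1-β))`, because independent Gaussians add by adding means and variances.
Independence holds since `X_s` is a measurable function of `ε_1, …, ε_s` alone.
-/

open Real MeasureTheory ProbabilityTheory Finset NNReal

section

variable {Ω : Type*}

lemma exists_measurable_eq_comp_of_recursion {ε X : ℕ → Ω → ℝ} {f : ℕ → ℝ → ℝ → ℝ}
    (hf : ∀ t, Measurable (Function.uncurry (f t))) {x₀ : ℝ} {T : ℕ}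
    (hX0 : X 0 = fun _ ↦ x₀)
    (hXrec : ∀ t, 1 ≤ t → t ≤ T → X t = fun ω ↦ f t (X (t - 1) ω) (ε t ω)) :
    ∀ s ≤ T, ∃ φ : ((Icc 1 s : Finset ℕ) → ℝ) → ℝ,
      Measurable φ ∧ X s = fun ω ↦ φ fun i ↦ ε i ω := by
  intro s
  induction s with
  | zero => exact fun _ ↦ ⟨fun _ ↦ x₀, measurable_const, hX0⟩
  | succ n ih =>
    intro hn
    obtain ⟨φ, hφ, hXn⟩ := ih (by omega)
    have hsub : Icc 1 n ⊆ Icc 1 (n + 1) := Icc_subset_Icc_right n.le_succ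
    let last : (Icc 1 (n + 1) : Finset ℕ) := ⟨n + 1, by simp⟩
    refine ⟨fun v ↦ f (n + 1) (φ fun i ↦ v ⟨i, hsub i.2⟩) (v last), ?_, ?_⟩
    · exact (hf (n + 1)).comp
        ((hφ.comp (measurable_pi_lambda _ fun i ↦ measurable_pi_apply _)).prodMk
          (measurable_pi_apply last))
    · rw [hXrec (n + 1) (by omega) hn, Nat.add_sub_cancel, hXn]

variable [MeasurableSpace Ω] {P : Measure Ω}

lemma ProbabilityTheory.iIndepFun.indepFun_comp_of_notMem {ι γ : Type*} [MeasurableSpace γ]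
    {β : ι → Type*} [∀ i, MeasurableSpace (β i)] {f : ∀ i, Ω → β i} (hf : iIndepFun f P)
    (hf_meas : ∀ i, AEMeasurable (f i) P) {S : Finset ι} {j : ι} (hj : j ∉ S)
    {φ : (∀ i : S, β i) → γ} (hφ : Measurable φ) :
    IndepFun (fun ω ↦ φ fun i : S ↦ f i ω) (f j) P :=
  (hf.indepFun_finset₀ S {j} (disjoint_singleton_right.2 hj) hf_meas).comp hφ
    (measurable_pi_apply (⟨j, mem_singleton_self j⟩ : ({j} : Finset ι)))

lemma map_const_mul_eq_gaussianReal {X : Ω → ℝ} {m : ℝ} {v : ℝ≥0}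
    (hX : P.map X = gaussianReal m v) (c : ℝ) :
    P.map (fun ω ↦ c * X ω) = gaussianReal (c * m) (.mk (c ^ 2) (sq_nonneg c) * v) := by
  have hXae : AEMeasurable X P := .of_map_ne_zero (by simp [hX, NeZero.ne])
  rw [← gaussianReal_map_const_mul, ← hX,
    AEMeasurable.map_map_of_aemeasurable (measurable_const_mul c).aemeasurable hXae]
  rfl

lemma map_diffusion_step_eq_gaussianReal {X Y : Ω → ℝ} (hXY : IndepFun X Y P) {a b x₀ : ℝ}
    (ha : a ≤ 1) (hb : b ∈ Set.Icc 0 1)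
    (hX : P.map X = gaussianReal (√a * x₀) (1 - a).toNNReal) (hY : P.map Y = gaussianReal 0 1) :
    P.map (fun ω ↦ √(1 - b) * X ω + √b * Y ω) =
      gaussianReal (√(a * (1 - b)) * x₀) (1 - a * (1 - b)).toNNReal := by
  have hsum := gaussianReal_add_gaussianReal_of_indepFun
    (hXY.comp (measurable_const_mul √(1 - b)) (measurable_const_mul √b))
    (map_const_mul_eq_gaussianReal hX _) (map_const_mul_eq_gaussianReal hY _)
  refine hsum.trans (congr_arg₂ _ ?_ ?_)
  · rw [sqrt_mul' a (by linarith [hb.2])]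
    ring
  · apply NNReal.coe_injective
    simp only [NNReal.coe_add, NNReal.coe_mul, NNReal.coe_mk, NNReal.coe_one,
      sq_sqrt (sub_nonneg.2 hb.2), sq_sqrt hb.1, coe_toNNReal _ (sub_nonneg.2 ha),
      coe_toNNReal _ (by nlinarith [hb.1, hb.2] : 0 ≤ 1 - a * (1 - b))]
    ring

end

theorem forward_diffusion_marginal_closed_form_general
    {Ω : Type*} [MeasurableSpace Ω] (P : Measure Ω) [IsProbabilityMeasure P]
    (T : ℕ)
    (β : ℕ → ℝ) (hβ : ∀ t, 1 ≤ t → t ≤ T → β t ∈ Set.Ioo (0 : ℝ) 1)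
    (ε : ℕ → Ω → ℝ)
    (hεindep : iIndepFun ε P)
    (hεlaw : ∀ t, P.map (ε t) = gaussianReal 0 1)
    (x₀ : ℝ) (X : ℕ → Ω → ℝ)
    (hX0 : X 0 = fun _ => x₀)
    (hXrec : ∀ t, 1 ≤ t → t ≤ T →
      X t = fun ω => Real.sqrt (1 - β t) * X (t - 1) ω + Real.sqrt (β t) * ε t ω) :
    ∀ t, 1 ≤ t → t ≤ T →
      P.map (X t) =
        gaussianReal (Real.sqrt (∏ i ∈ Finset.Icc 1 t, (1 - β i)) * x₀)
          (1 - ∏ i ∈ Finset.Icc 1 t, (1 - β i)).toNNReal := by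
  have hβ' : ∀ t, 1 ≤ t → t ≤ T → β t ∈ Set.Icc 0 1 := fun t h1 h2 ↦
    Set.Ioo_subset_Icc_self (hβ t h1 h2)
  have hεae : ∀ t, AEMeasurable (ε t) P := fun t ↦ .of_map_ne_zero (by simp [hεlaw, NeZero.ne])
  have hindep : ∀ s, s + 1 ≤ T → IndepFun (X s) (ε (s + 1)) P := by
    intro s hs
    obtain ⟨φ, hφ, hXs⟩ := exists_measurable_eq_comp_of_recursion
      (f := fun t x e ↦ √(1 - β t) * x + √(β t) * e) (fun t ↦ by fun_prop) hX0 hXrec s (by omega)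
    rw [hXs]
    exact hεindep.indepFun_comp_of_notMem hεae (by simp) hφ
  have hprod_le : ∀ s ≤ T, ∏ i ∈ Icc 1 s, (1 - β i) ≤ 1 := fun s hs ↦
    prod_le_one (fun i hi ↦ sub_nonneg.2 (hβ' i (mem_Icc.1 hi).1 (by grind)).2)
      (fun i hi ↦ sub_le_self _ (hβ' i (mem_Icc.1 hi).1 (by grind)).1)
  suffices h : ∀ s ≤ T, P.map (X s) = gaussianReal (√(∏ i ∈ Icc 1 s, (1 - β i)) * x₀)
      (1 - ∏ i ∈ Icc 1 s, (1 - β i)).toNNReal from fun t _ ht ↦ h t ht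
  intro s
  induction s with
  | zero => simp [hX0, gaussianReal_zero_var]
  | succ n ih =>
    intro hn
    rw [hXrec (n + 1) (by omega) hn, Nat.add_sub_cancel, prod_Icc_succ_top (by omega)]
    exact map_diffusion_step_eq_gaussianReal (hindep n hn) (hprod_le n (by omega))
      (hβ' _ (by omega) hn) (ih (by omega)) (hεlaw _)

/-- Closed form of the forward diffusion conditional marginal: if
`X_t = √(1−β_t)·X_{t−1} + √β_t·ε_t` with `X_0 = x₀` and i.i.d. standard Gaussian
noise `ε_t`, then the law of `X_t` is `N(√ᾱ_t·x₀, 1−ᾱ_t)` where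
`ᾱ_t = ∏_{i=1}^t (1−β_i)`. -/
theorem forward_diffusion_marginal_closed_form
    {Ω : Type*} [MeasurableSpace Ω] (P : Measure Ω) [IsProbabilityMeasure P]
    (T : ℕ) (hT : 1 ≤ T)
    (β : ℕ → ℝ) (hβ : ∀ t, 1 ≤ t → t ≤ T → β t ∈ Set.Ioo (0 : ℝ) 1)
    (ε : ℕ → Ω → ℝ) (hεmeas : ∀ t, Measurable (ε t))
    (hεindep : iIndepFun ε P)
    (hεlaw : ∀ t, P.map (ε t) = gaussianReal 0 1)
    (x₀ : ℝ) (X : ℕ → Ω → ℝ)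
    (hX0 : X 0 = fun _ => x₀)
    (hXrec : ∀ t, 1 ≤ t → t ≤ T →
      X t = fun ω => Real.sqrt (1 - β t) * X (t - 1) ω + Real.sqrt (β t) * ε t ω) :
    ∀ t, 1 ≤ t → t ≤ T →
      P.map (X t) =
        gaussianReal (Real.sqrt (∏ i ∈ Finset.Icc 1 t, (1 - β i)) * x₀)
          (1 - ∏ i ∈ Finset.Icc 1 t, (1 - β i)).toNNReal :=
  forward_diffusion_marginal_closed_form_general P T β hβ ε hεindep hεlaw x₀ X hX0 hXrec
end
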